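/- Let H be a graph with an independent set S ⊆ V(H), let T = V(H) − S, and suppose the subgraph induced on T has e edges. Then μ(H) ≤ 4e/(|S| + |T|). -/

import Mathlib

open Matrix SimpleGraph Finset

/-- The signless Laplacian matrix `Q(G) = D(G) + A(G)` of a simple graph. -/
def signlessLap {V : Type*} [Fintype V] [DecidableEq V] (G : SimpleGraph V)
    [DecidableRel G.Adj] : Matrix V V ℝ :=
  G.degMatrix ℝ + G.adjMatrix ℝ

/-!
Since `μ` is the least eigenvalue of the symmetric matrix `Q`, the matrix `Q - μ I` is positive
semidefinite, so `μ (xᵀx) ≤ xᵀ Q x = ∑_{ij ∈ E} (x_i + x_j)²` for every `x`. Take `x = -1` on `S`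
and `+1` on `T`: an edge between `S` and `T` contributes `0`, there are no edges inside `S`, and
each of the `e` edges inside `T` contributes `4`, while `xᵀx = |S| + |T|`.
-/

namespace Matrix.IsHermitian

variable {n : Type*} [Fintype n] [DecidableEq n] {A : Matrix n n ℝ} {μ : ℝ}

theorem posSemidef_sub_smul_one (hA : A.IsHermitian)
    (hμ : ∀ (ν : ℝ) (x : n → ℝ), x ≠ 0 → A *ᵥ x = ν • x → μ ≤ ν) :
    (A - μ • 1).PosSemidef := by
  have hM : (A - μ • 1).IsHermitian := hA.sub (isHermitian_one.smul (IsSelfAdjoint.all μ))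
  refine hM.posSemidef_iff_eigenvalues_nonneg.mpr fun i => show (0 : ℝ) ≤ _ from ?_
  set v := (hM.eigenvectorBasis i).ofLp
  have hv : v ≠ 0 := fun h =>
    (hM.eigenvectorBasis.toBasis.ne_zero i) (by simpa [v] using congrArg (WithLp.toLp 2) h)
  have hAv : A *ᵥ v = (hM.eigenvalues i + μ) • v := by
    have := hM.mulVec_eigenvectorBasis i
    rw [sub_mulVec, smul_mulVec, one_mulVec, sub_eq_iff_eq_add] at this
    rw [this, add_smul]
  linarith [hμ _ v hv hAv]

theorem mul_dotProduct_self_le (hA : A.IsHermitian)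
    (hμ : ∀ (ν : ℝ) (x : n → ℝ), x ≠ 0 → A *ᵥ x = ν • x → μ ≤ ν) (x : n → ℝ) :
    μ * (x ⬝ᵥ x) ≤ x ⬝ᵥ (A *ᵥ x) := by
  have := (hA.posSemidef_sub_smul_one hμ).dotProduct_mulVec_nonneg x
  rw [star_trivial, sub_mulVec, dotProduct_sub, smul_mulVec, one_mulVec, dotProduct_smul,
    smul_eq_mul] at this
  linarith

end Matrix.IsHermitian

theorem SimpleGraph.sum_sum_ite_adj_eq_two_mul_card_edgeFinset_induce {V : Type*} [Fintype V]
    (G : SimpleGraph V) [DecidableRel G.Adj] (s : Set V) [DecidablePred (· ∈ s)] :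
    ∑ u ∈ s.toFinset, ∑ v ∈ s.toFinset, (if G.Adj u v then 1 else 0 : ℕ) =
      2 * #(G.induce s).edgeFinset := by
  rw [← sum_degrees_eq_twice_card_edges, Finset.sum_subtype (p := (· ∈ s)) _ (by simp)]
  refine sum_congr rfl fun u _ => ?_
  rw [Finset.sum_subtype (p := (· ∈ s)) _ (by simp)]
  exact ((G.induce s).degree_eq_sum_if_adj u).symm

def signVector {V : Type*} [DecidableEq V] (S : Finset V) : V → ℝ :=
  fun v => if v ∈ S then -1 else 1

section signlessLap

variable {V : Type*} [Fintype V] [DecidableEq V] (G : SimpleGraph V) [DecidableRel G.Adj]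

theorem isHermitian_signlessLap : (signlessLap G).IsHermitian :=
  (G.isHermitian_degMatrix ℝ).add (G.isHermitian_adjMatrix ℝ)

theorem dotProduct_mulVec_signlessLap (x : V → ℝ) :
    x ⬝ᵥ (signlessLap G *ᵥ x) =
      (∑ i, ∑ j, if G.Adj i j then (x i + x j) ^ 2 else 0) / 2 := by
  simp_rw [signlessLap, add_mulVec, dotProduct_add, dotProduct_mulVec_degMatrix,
    dotProduct_mulVec_adjMatrix, ← sum_add_distrib, degree_eq_sum_if_adj, sum_mul, ite_mul,
    one_mul, zero_mul, ← sum_add_distrib, ite_add_ite, add_zero]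
  rw [← add_self_div_two (∑ i : V, ∑ j : V, _)]
  conv_lhs => enter [1, 2, 2, i, 2, j]; rw [if_congr (G.adj_comm i j) rfl rfl]
  conv_lhs => enter [1, 2]; rw [Finset.sum_comm]
  simp_rw [← sum_add_distrib, ite_add_ite]
  congr 2 with i
  congr 2 with j
  ring_nf

theorem signVector_dotProduct_self (S : Finset V) :
    signVector S ⬝ᵥ signVector S = Fintype.card V := by
  have hsq : ∀ v, signVector S v * signVector S v = 1 := fun v => by
    unfold signVector; split_ifs <;> norm_num
  simp [dotProduct, hsq]

theorem dotProduct_mulVec_signlessLap_signVector {S : Finset V}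
    (hind : ∀ u ∈ S, ∀ v ∈ S, ¬ G.Adj u v) :
    signVector S ⬝ᵥ (signlessLap G *ᵥ signVector S) =
      4 * #(G.induce {v | v ∉ S}).edgeFinset := by
  have hterm : ∀ u v, (if G.Adj u v then (signVector S u + signVector S v) ^ 2 else 0) =
      if u ∈ {v | v ∉ S}.toFinset then
        (if v ∈ {v | v ∉ S}.toFinset then 4 * ((if G.Adj u v then 1 else 0 : ℕ) : ℝ) else 0)
      else 0 := by
    intro u v
    by_cases hu : u ∈ S <;> by_cases hv : v ∈ S <;> by_cases huv : G.Adj u v <;>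
      simp_all [signVector]
    -- only the edge inside `T` is left: `(1 + 1) ^ 2 = 4`
    norm_num
  rw [dotProduct_mulVec_signlessLap]
  simp_rw [hterm, sum_ite_irrel, sum_const_zero, sum_ite_mem, univ_inter, ← mul_sum,
    ← Nat.cast_sum, sum_sum_ite_adj_eq_two_mul_card_edgeFinset_induce]
  push_cast
  ring

end signlessLap

/-- If `S` is an independent set of `H`, `T = V(H) − S`, and the subgraph induced on `T`
has `e` edges, then `μ(H) ≤ 4e / (|S| + |T|)`. -/
theorem stmt8 {V : Type*} [Fintype V] [DecidableEq V] (H : SimpleGraph V)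
    [DecidableRel H.Adj] (S : Finset V)
    (hind : ∀ u ∈ S, ∀ v ∈ S, ¬ H.Adj u v)
    (e : ℕ)
    (he : e = (H.induce {v : V | v ∉ S}).edgeFinset.card)
    (μ : ℝ)
    (hμ : ∃ x : V → ℝ, x ≠ 0 ∧ signlessLap H *ᵥ x = μ • x)
    (hmin : ∀ (ν : ℝ) (x : V → ℝ), x ≠ 0 → signlessLap H *ᵥ x = ν • x → μ ≤ ν) :
    μ ≤ 4 * e / (S.card + Sᶜ.card) := by
  obtain ⟨x, hx, -⟩ := hμ
  have : Nonempty V := not_isEmpty_iff.mp fun _ => hx (Subsingleton.elim x 0)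
  have hRayleigh := (isHermitian_signlessLap H).mul_dotProduct_self_le hmin (signVector S)
  rw [signVector_dotProduct_self, dotProduct_mulVec_signlessLap_signVector H hind, ← he]
    at hRayleigh
  rw [← Nat.cast_add, card_add_card_compl, le_div_iff₀ (by exact_mod_cast Fintype.card_pos)]
  exact hRayleigh
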